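/- arXiv:math/9802004 — 2 statements merged into one kernel-verified Lean document; each statement's English description precedes it below -/
import Mathlib

section
/- Let V be a complex vector space with basis e_1, …, e_d, and let x : V → V be a linear endomorphism with x(e_i) = μ_i·e_i for pairwise distinct scalars μ_1, …, μ_d ∈ ℂ. Then for every n ≥ 1, the set of n-step partial flags F = (0 = F_0 ⊆ F_1 ⊆ ⋯ ⊆ F_n = V) satisfying x(F_i) ⊆ F_i for all i is finite of cardinality n^d; it is in bijection with the set of maps φ : {1,…,d} → {1,…,n}, the flag corresponding to φ being F_j = span{e_i : φ(i) ≤ j}. -/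
/-!
An `x`-invariant subspace `W` is spanned by the basis vectors it contains: for `v ∈ W`, the
component `(e.repr v i) • e i` equals `p(x) v` for the Lagrange polynomial `p` that is `1` at
`μ i` and `0` at the other eigenvalues, so it lies in `W`. Hence an invariant flag is determined by
the chain of index sets `{i | e i ∈ F_j}`, growing from `∅` to everything, and such a chain is
recorded by the step `φ i` at which each index enters.
-/

/-- The `n`-step partial flags `0 = F_0 ⊆ F_1 ⊆ ⋯ ⊆ F_n = V` that are invariant
under a fixed endomorphism `x` (i.e. `x (F_j) ⊆ F_j` for all `j`). -/
def InvariantPartialFlags (V : Type*) [AddCommGroup V] [Module ℂ V]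
    (n : ℕ) (x : V →ₗ[ℂ] V) : Type _ :=
  {F : Fin (n + 1) → Submodule ℂ V //
    Monotone F ∧ F 0 = ⊥ ∧ F (Fin.last n) = ⊤ ∧
    ∀ j : Fin (n + 1), Submodule.map x (F j) ≤ F j}

open Polynomial Submodule

namespace Module.Basis

variable {K V ι : Type*} [Field K] [AddCommGroup V] [Module K V]
  {e : Basis ι K V} {μ : ι → K} {x : V →ₗ[K] V}

theorem repr_smul_mem_of_map_le (hμ : Function.Injective μ) (hx : ∀ i, x (e i) = μ i • e i)
    {W : Submodule K V} (hW : W.map x ≤ W) {v : V} (hv : v ∈ W) (i : ι) :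
    e.repr v i • e i ∈ W := by
  classical
  set s := insert i (e.repr v).support
  set p := Lagrange.basis s μ i
  have aeval_basis (k : ι) : aeval x p (e k) = p.eval (μ k) • e k :=
    Module.End.aeval_apply_of_hasEigenvector ⟨Module.End.mem_eigenspace_iff.mpr (hx k), e.ne_zero k⟩
  have hproj : aeval x p v = e.repr v i • e i := calc
    aeval x p v = ∑ k ∈ (e.repr v).support, e.repr v k • p.eval (μ k) • e k := by
      conv_lhs => rw [← e.linearCombination_repr v, Finsupp.linearCombination_apply]
      simp only [Finsupp.sum, map_sum, map_smul, aeval_basis]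
    _ = e.repr v i • e i := by
      refine (Finset.sum_eq_single i (fun k hk hki => ?_) fun hi => ?_).trans ?_
      · rw [Lagrange.eval_basis_of_ne (Ne.symm hki) (Finset.mem_insert_of_mem hk), zero_smul,
          smul_zero]
      · rw [Finsupp.notMem_support_iff.mp hi, zero_smul]
      · rw [Lagrange.eval_basis_self hμ.injOn (Finset.mem_insert_self _ _), one_smul]
  rw [← hproj]
  exact aeval_apply_smul_mem_of_le_comap hv p x (map_le_iff_le_comap.mp hW)

theorem eq_span_image_of_map_le (hμ : Function.Injective μ) (hx : ∀ i, x (e i) = μ i • e i)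
    {W : Submodule K V} (hW : W.map x ≤ W) :
    W = span K (e '' {i | e i ∈ W}) := by
  refine le_antisymm (fun v hv => ?_) (span_le.mpr (Set.image_subset_iff.mpr fun _ => id))
  rw [← e.linearCombination_repr v, Finsupp.linearCombination_apply]
  refine sum_mem fun i hi => smul_mem _ _ (subset_span ⟨i, ?_, rfl⟩)
  exact (smul_mem_iff _ (Finsupp.mem_support_iff.mp hi)).mp (repr_smul_mem_of_map_le hμ hx hW hv i)

end Module.Basis

theorem Fin.exists_val_lt_iff_of_monotone {n : ℕ} {P : Fin (n + 1) → Prop} (hP : Monotone P)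
    (h0 : ¬P 0) (hlast : P (Fin.last n)) : ∃ k : Fin n, ∀ j : Fin (n + 1), P j ↔ (k : ℕ) < j := by
  classical
  obtain ⟨m, hm, hmin⟩ := (Finset.univ.filter P).exists_min_image id ⟨_, by simpa using hlast⟩
  simp only [Finset.mem_filter, Finset.mem_univ, true_and, id] at hm hmin
  have hm0 : m ≠ 0 := by rintro rfl; exact h0 hm
  obtain ⟨k, rfl⟩ := Fin.exists_succ_eq.mpr hm0
  -- `k.succ ≤ j` and `(k : ℕ) < j` are definitionally equal
  exact ⟨k, fun j => ⟨hmin j, fun hj => hP (show k.succ ≤ j from hj) hm⟩⟩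

namespace InvariantPartialFlags

variable {V ι : Type*} [AddCommGroup V] [Module ℂ V] {n : ℕ} {e : Module.Basis ι ℂ V}
  {μ : ι → ℂ} {x : V →ₗ[ℂ] V}

def ofFun (e : Module.Basis ι ℂ V) (hx : ∀ i, x (e i) = μ i • e i) (φ : ι → Fin n) :
    InvariantPartialFlags V n x :=
  ⟨fun j => span ℂ (e '' {i | (φ i : ℕ) < j}),
    fun j j' hjj' => span_mono (Set.image_mono fun i (hi : (φ i : ℕ) < j) =>
      hi.trans_le (Fin.le_def.mp hjj')),
    by simp,
    by simp [e.span_eq],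
    fun j => by
      rw [map_span_le]
      rintro _ ⟨i, hi, rfl⟩
      rw [hx]
      exact smul_mem _ _ (subset_span ⟨i, hi, rfl⟩)⟩

@[simp]
theorem ofFun_apply (hx : ∀ i, x (e i) = μ i • e i) (φ : ι → Fin n) (j : Fin (n + 1)) :
    (ofFun e hx φ).1 j = span ℂ (e '' {i | (φ i : ℕ) < j}) :=
  rfl

theorem basis_mem_ofFun_iff (hx : ∀ i, x (e i) = μ i • e i) (φ : ι → Fin n) (i : ι)
    (j : Fin (n + 1)) : e i ∈ (ofFun e hx φ).1 j ↔ (φ i : ℕ) < j := by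
  rw [ofFun_apply, e.self_mem_span_image, Set.mem_ofPred_eq]

theorem ofFun_injective (hx : ∀ i, x (e i) = μ i • e i) :
    Function.Injective (ofFun (n := n) e hx) := by
  intro φ ψ h
  funext i
  have key : ∀ j : Fin (n + 1), (φ i : ℕ) < j ↔ (ψ i : ℕ) < j := fun j => by
    rw [← basis_mem_ofFun_iff hx, h, basis_mem_ofFun_iff hx]
  have h1 := (key (ψ i).succ).mpr (by simp)
  have h2 := (key (φ i).succ).mp (by simp)
  simp only [Fin.val_succ] at h1 h2
  exact Fin.ext (by omega)

theorem ofFun_surjective (hμ : Function.Injective μ) (hx : ∀ i, x (e i) = μ i • e i) :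
    Function.Surjective (ofFun (n := n) e hx) := by
  intro F
  obtain ⟨hmono, h0, hlast, hinv⟩ := F.2
  have threshold (i : ι) := Fin.exists_val_lt_iff_of_monotone (P := fun j => e i ∈ F.1 j)
    (fun j j' h => @hmono j j' h (e i)) (by simp [h0, e.ne_zero]) (by simp [hlast])
  choose φ hφ using threshold
  refine ⟨φ, Subtype.ext (funext fun j => ?_)⟩
  rw [ofFun_apply, e.eq_span_image_of_map_le hμ hx (hinv j)]
  simp only [hφ]

noncomputable def equivFun (hμ : Function.Injective μ) (hx : ∀ i, x (e i) = μ i • e i) :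
    (ι → Fin n) ≃ InvariantPartialFlags V n x :=
  Equiv.ofBijective (ofFun e hx) ⟨ofFun_injective hx, ofFun_surjective hμ hx⟩

end InvariantPartialFlags

theorem invariant_flags_of_regular_semisimple_general
    (V : Type*) [AddCommGroup V] [Module ℂ V] (d : ℕ)
    (e : Module.Basis (Fin d) ℂ V) (μ : Fin d → ℂ) (hμ : Function.Injective μ)
    (x : V →ₗ[ℂ] V) (hx : ∀ i, x (e i) = μ i • e i)
    (n : ℕ) :
    ∃ bij : (Fin d → Fin n) ≃ InvariantPartialFlags V n x,
      (∀ (φ : Fin d → Fin n) (j : Fin (n + 1)),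
        (bij φ).1 j = Submodule.span ℂ (e '' {i : Fin d | (φ i : ℕ) < (j : ℕ)})) ∧
      Nat.card (InvariantPartialFlags V n x) = n ^ d := by
  refine ⟨InvariantPartialFlags.equivFun hμ hx, fun _ _ => rfl, ?_⟩
  rw [← Nat.card_congr (InvariantPartialFlags.equivFun hμ hx)]
  simp

/-- Section 10: for a regular semisimple operator `x` (diagonal in the basis
`e_1, …, e_d` with pairwise distinct eigenvalues), the set of `x`-invariant
`n`-step partial flags is in bijection with the maps `φ : {1,…,d} → {1,…,n}`
(the flag corresponding to `φ` being `F_j = span{e_i : φ(i) ≤ j}`); in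
particular it is finite of cardinality `n^d`. -/
theorem invariant_flags_of_regular_semisimple
    (V : Type*) [AddCommGroup V] [Module ℂ V] (d : ℕ)
    (e : Module.Basis (Fin d) ℂ V) (μ : Fin d → ℂ) (hμ : Function.Injective μ)
    (x : V →ₗ[ℂ] V) (hx : ∀ i, x (e i) = μ i • e i)
    (n : ℕ) (hn : 1 ≤ n) :
    ∃ bij : (Fin d → Fin n) ≃ InvariantPartialFlags V n x,
      (∀ (φ : Fin d → Fin n) (j : Fin (n + 1)),
        (bij φ).1 j = Submodule.span ℂ (e '' {i : Fin d | (φ i : ℕ) < (j : ℕ)})) ∧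
      Nat.card (InvariantPartialFlags V n x) = n ^ d :=
  invariant_flags_of_regular_semisimple_general V d e μ hμ x hx n
end

section
/- (Quadratic relation for the Demazure–Lusztig operator.) Let k = ℤ[q, q^{−1}] be the ring of Laurent polynomials, L an additive abelian group, α ∈ L, and c : L →+ ℤ with c(α) = 2; set s(λ) = λ − c(λ)·α and A = AddMonoidAlgebra k L. Assume Y_α − 1 is not a zero divisor in A. Let T : A → A be a k-linear map satisfying, for every λ ∈ L, (Y_α − 1)·T(Y_λ) = (Y_λ − Y_{s(λ)}) − q·(Y_λ − Y_{s(λ)+α}). Then T satisfies the Iwahori–Hecke quadratic relation (T + id) ∘ (T − q·id) = 0, i.e. T ∘ T = (q − 1)·T + q·id. -/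
/-!
Over the fraction field of `k[L]`, the defining relation says
`T = ((1 - q) + (q Y_α - 1) s) / (Y_α - 1)`, where `s` is the algebra involution induced by the
reflection `λ ↦ λ - c(λ) α`; it sends `Y_α` to `Y_α⁻¹`, hence `Y_α - 1` to `-Y_α⁻¹ (Y_α - 1)`.
Multiplying `T² - (q - 1) T - q` by the regular element `(Y_α - 1)²` and moving both copies of
`Y_α - 1` past `T` and `s` turns the quadratic relation into a polynomial identity in `Y_α`.
Nothing beyond `s² = 1`, `Y_α s(Y_α) = 1` and the regularity of `Y_α - 1` enters, and `q` is
arbitrary.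
-/

open AddMonoidAlgebra

namespace DemazureLusztig

section Abstract

variable {k A F : Type*} [CommRing k] [CommRing A] [Algebra k A] [FunLike F A A]
  [AlgHomClass F k A A] {S : F} {Y : A} {q : k} {T : A → A}

theorem sub_one_mul_map_apply (hS : Function.Involutive S) (hY : Y * S Y = 1)
    (hT : ∀ x, (Y - 1) * T x = (1 - q) • x + (q • Y - 1) * S x) (x : A) :
    (Y - 1) * S (T x) = (q - 1) • (Y * S x) + (Y - q • 1) * x := by
  have hST : (S Y - 1) * S (T x) = (1 - q) • S x + (q • S Y - 1) * x := by
    simpa [hS x] using congrArg S (hT x)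
  simp only [Algebra.smul_def, map_sub, map_one] at hST ⊢
  -- `-Y * (S Y - 1) = Y - 1`
  linear_combination (-Y) * hST + (S (T x) - algebraMap k A q * x) * hY

theorem quadratic_relation_of_sub_one_mul_apply (hS : Function.Involutive S) (hY : Y * S Y = 1)
    (hreg : Y - 1 ∈ nonZeroDivisors A)
    (hT : ∀ x, (Y - 1) * T x = (1 - q) • x + (q • Y - 1) * S x) (a : A) :
    T (T a) = (q - 1) • T a + q • a := by
  rw [← mul_cancel_left_mem_nonZeroDivisors hreg, ← mul_cancel_left_mem_nonZeroDivisors hreg]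
  have e1 := hT a
  have e2 := hT (T a)
  have e3 := sub_one_mul_map_apply hS hY hT a
  simp only [Algebra.smul_def, map_sub, map_one] at e1 e2 e3 ⊢
  linear_combination (Y - 1) * e2 + (algebraMap k A q * Y - 1) * e3
    + ((1 - algebraMap k A q) - (algebraMap k A q - 1) * (Y - 1)) * e1

end Abstract

section GroupAlgebra

variable (k : Type*) {L : Type*} [CommRing k] [AddCommGroup L] {α : L} {c : L →+ ℤ}

noncomputable def reflectionAlgEquiv (hc : c α = 2) :
    AddMonoidAlgebra k L ≃ₐ[k] AddMonoidAlgebra k L :=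
  domCongr k k (Module.reflection (f := c.toIntLinearMap) hc).toAddEquiv

variable {k}

theorem reflectionAlgEquiv_single (hc : c α = 2) (μ : L) (r : k) :
    reflectionAlgEquiv k hc (single μ r) = single (μ - c μ • α) r := by
  simp only [reflectionAlgEquiv, domCongr_single]
  rfl

theorem involutive_reflectionAlgEquiv (hc : c α = 2) :
    Function.Involutive (reflectionAlgEquiv k hc) :=
  (reflectionAlgEquiv k hc).symm_apply_apply

theorem single_mul_reflectionAlgEquiv_single (hc : c α = 2) :
    single α (1 : k) * reflectionAlgEquiv k hc (single α 1) = 1 := by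
  rw [reflectionAlgEquiv_single, single_mul_single, hc, two_zsmul, one_mul,
    show α + (α - (α + α)) = 0 by abel]
  rfl

theorem sub_one_mul_apply_eq_of_single (hc : c α = 2) (q : k)
    (T : AddMonoidAlgebra k L →ₗ[k] AddMonoidAlgebra k L)
    (hT : ∀ μ : L, (single α (1 : k) - 1) * T (single μ 1)
        = (single μ 1 - single (μ - c μ • α) 1) - q • (single μ 1 - single (μ - c μ • α + α) 1))
    (x : AddMonoidAlgebra k L) :
    (single α 1 - 1) * T x = (1 - q) • x + (q • single α 1 - 1) * reflectionAlgEquiv k hc x := by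
  have key : LinearMap.mulLeft k (single α (1 : k) - 1) ∘ₗ T
      = (1 - q) • LinearMap.id + LinearMap.mulLeft k (q • single α 1 - 1) ∘ₗ
          (reflectionAlgEquiv k hc).toLinearMap := by
    refine lhom_ext' fun μ => LinearMap.ext_ring ?_
    simp only [LinearMap.comp_apply, lsingle_apply, LinearMap.mulLeft_apply, LinearMap.add_apply,
      LinearMap.smul_apply, LinearMap.id_apply, AlgEquiv.toLinearMap_apply,
      reflectionAlgEquiv_single, hT, sub_mul, smul_mul_assoc, single_mul_single, one_mul, add_comm α]
    module
  exact congr($key x)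

end GroupAlgebra

end DemazureLusztig

/-- Quadratic relation for the Demazure–Lusztig operator (Section 11).  Let
`k = ℤ[q, q⁻¹]`, `L` an additive abelian group, `α ∈ L`, `c : L →+ ℤ` with
`c(α) = 2`, `s(λ) = λ − c(λ)·α`, and `A = k[L]` the group algebra with basis
`Y_λ`.  Assume `Y_α − 1` is not a zero divisor in `A`, and let `T : A → A` be a
`k`-linear map with
`(Y_α − 1)·T(Y_λ) = (Y_λ − Y_{s(λ)}) − q·(Y_λ − Y_{s(λ)+α})` for every `λ`.
Then `(T + 1)(T − q) = 0`, i.e. `T² = (q − 1)·T + q·id`. -/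
theorem demazure_lusztig_quadratic_relation
    (L : Type*) [AddCommGroup L] (α : L) (c : L →+ ℤ) (hc : c α = 2)
    (hreg : (AddMonoidAlgebra.single α (1 : LaurentPolynomial ℤ) - 1) ∈
      nonZeroDivisors (AddMonoidAlgebra (LaurentPolynomial ℤ) L))
    (T : AddMonoidAlgebra (LaurentPolynomial ℤ) L →ₗ[LaurentPolynomial ℤ]
         AddMonoidAlgebra (LaurentPolynomial ℤ) L)
    (hT : ∀ lam : L,
      (AddMonoidAlgebra.single α (1 : LaurentPolynomial ℤ) - 1) *
          T (AddMonoidAlgebra.single lam 1)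
        = (AddMonoidAlgebra.single lam (1 : LaurentPolynomial ℤ) -
              AddMonoidAlgebra.single (lam - c lam • α) 1)
          - (LaurentPolynomial.T 1 : LaurentPolynomial ℤ) •
            (AddMonoidAlgebra.single lam (1 : LaurentPolynomial ℤ) -
              AddMonoidAlgebra.single (lam - c lam • α + α) 1)) :
    ∀ a : AddMonoidAlgebra (LaurentPolynomial ℤ) L,
      T (T a) = ((LaurentPolynomial.T 1 : LaurentPolynomial ℤ) - 1) • T a + (LaurentPolynomial.T 1 : LaurentPolynomial ℤ) • a := by
  have hT_global := DemazureLusztig.sub_one_mul_apply_eq_of_single hc (LaurentPolynomial.T 1) T hT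
  exact DemazureLusztig.quadratic_relation_of_sub_one_mul_apply
    (DemazureLusztig.involutive_reflectionAlgEquiv hc)
    (DemazureLusztig.single_mul_reflectionAlgEquiv_single hc) hreg hT_global
end
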